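/- Let F_0 ∈ H²(𝔻, L(ℂ^r, ℂ^m)) have columns {W_1, …, W_r} forming an orthonormal basis of W = M ⊖ (M ∩ zH²(𝔻, ℂ^m)) for a nearly S*-invariant subspace M of H²(𝔻, ℂ^m) (defect 0). Then for any inner multiplier Θ with K_Θ the corresponding model space as in the Chalendar–Chevrot–Partington theorem, the operator T_{F_0} : K_Θ → M, G ↦ P(F_0 G), is isometric: ‖T_{F_0} G‖ = ‖G‖ for all G ∈ K_Θ, where P is the projection of L¹-boundary functions onto H²(𝔻, ℂ^m). -/

import Mathlib

noncomputable section

open scoped ENNReal ComplexConjugate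
open ContinuousLinearMap

abbrev Cm (m : ℕ) := EuclideanSpace ℂ (Fin m)
abbrev H2 (m : ℕ) := lp (fun _ : ℕ => Cm m) 2

namespace Hardy

variable {m r : ℕ}

lemma two_toReal : (2 : ℝ≥0∞).toReal = 2 := by norm_num

def shiftFun (f : ℕ → Cm m) : ℕ → Cm m := fun n => match n with
  | 0 => 0
  | k + 1 => f k

lemma shift_memℓp (f : H2 m) : Memℓp (shiftFun (f : ∀ _, Cm m)) 2 := by
  rw [memℓp_gen_iff (by norm_num)]
  have hs : Summable fun n : ℕ => ‖(f : ∀ _, Cm m) n‖ ^ (2 : ℝ≥0∞).toReal :=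
    (lp.memℓp f).summable (by norm_num)
  have : Summable fun n : ℕ =>
      ‖shiftFun (f : ∀ _, Cm m) (n + 1)‖ ^ (2 : ℝ≥0∞).toReal := hs
  exact (summable_nat_add_iff 1).mp this

/-- The forward shift `S` on the vector-valued Hardy space (Taylor-coefficient model). -/
def S (m : ℕ) : H2 m →L[ℂ] H2 m :=
  LinearMap.mkContinuous
    { toFun := fun f => ⟨shiftFun (f : ∀ _, Cm m), shift_memℓp f⟩
      map_add' := by
        intro f g
        apply Subtype.ext
        have key : shiftFun (↑(f + g) : ∀ _, Cm m)
            = shiftFun (f : ∀ _, Cm m) + shiftFun (g : ∀ _, Cm m) := by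
          funext n
          have h : (shiftFun (f : ∀ _, Cm m) + shiftFun (g : ∀ _, Cm m)) n
              = shiftFun (f : ∀ _, Cm m) n + shiftFun (g : ∀ _, Cm m) n := rfl
          rw [h, lp.coeFn_add]
          cases n with
          | zero => simp [shiftFun]
          | succ k => simp [shiftFun]
        exact key
      map_smul' := by
        intro c f
        apply Subtype.ext
        have key : shiftFun (↑(c • f) : ∀ _, Cm m)
            = c • shiftFun (f : ∀ _, Cm m) := by
          funext n
          have h : (c • shiftFun (f : ∀ _, Cm m)) n
              = c • shiftFun (f : ∀ _, Cm m) n := rfl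
          rw [h, lp.coeFn_smul]
          cases n with
          | zero => simp [shiftFun]
          | succ k => simp [shiftFun]
        exact key }
    1
    (by
      intro f
      simp only [one_mul]
      apply le_of_eq
      have h2 : (0:ℝ) < (2 : ℝ≥0∞).toReal := by norm_num
      rw [lp.norm_eq_tsum_rpow h2, lp.norm_eq_tsum_rpow h2]
      congr 1
      have hsum : Summable fun n : ℕ =>
          ‖shiftFun (f : ∀ _, Cm m) n‖ ^ (2 : ℝ≥0∞).toReal := by
        rw [← memℓp_gen_iff (by norm_num)]; exact shift_memℓp f
      have key : ∑' n : ℕ, ‖shiftFun (f : ∀ _, Cm m) n‖ ^ (2 : ℝ≥0∞).toReal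
          = ∑' n : ℕ, ‖(f : ∀ _, Cm m) n‖ ^ (2 : ℝ≥0∞).toReal := by
        rw [hsum.tsum_eq_zero_add]
        simp [shiftFun]
      exact key)

/-- The backward shift `S*` (the adjoint of the forward shift). -/
def Sadj (m : ℕ) : H2 m →L[ℂ] H2 m := ContinuousLinearMap.adjoint (S m)

/-- `T` is a multiplier (multiplication by an operator-valued analytic function),
characterized by intertwining the shifts. -/
def IsMultiplier (T : H2 r →L[ℂ] H2 m) : Prop := S m ∘L T = T ∘L S r

/-- `T` is (the multiplication operator of) an inner multiplier: an isometric multiplier. -/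
def IsInnerMultiplier (T : H2 r →L[ℂ] H2 m) : Prop :=
  (∀ f, ‖T f‖ = ‖f‖) ∧ IsMultiplier T

/-- The model space `K_Θ = H² ⊖ Θ H²`. -/
def modelSpace (T : H2 r →L[ℂ] H2 m) : Submodule ℂ (H2 m) := (LinearMap.range (T : H2 r →ₗ[ℂ] H2 m))ᗮ

/-- The constant function with value `v` (Taylor coefficients `(v,0,0,…)`). -/
def const (v : Cm m) : H2 m := lp.single 2 0 v

/-- The constant function `eᵢ`. -/
def e (m : ℕ) (i : Fin m) : H2 m := const (EuclideanSpace.single i 1)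

lemma coord_norm_le (x : Cm m) (i : Fin m) : ‖x i‖ ≤ ‖x‖ := by
  rw [EuclideanSpace.norm_eq]
  have h1 : ‖x i‖ = Real.sqrt (‖x i‖ ^ 2) := by
    rw [Real.sqrt_sq (norm_nonneg _)]
  rw [h1]
  apply Real.sqrt_le_sqrt
  exact Finset.single_le_sum (f := fun j => ‖x j‖ ^ 2)
    (fun j _ => by positivity) (Finset.mem_univ i)

lemma coord_memℓp (i : Fin m) (f : H2 m) :
    Memℓp (fun n => EuclideanSpace.single (0 : Fin 1) ((f : ∀ _, Cm m) n i)) 2 := by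
  rw [memℓp_gen_iff (by norm_num)]
  have hs : Summable fun n : ℕ => ‖(f : ∀ _, Cm m) n‖ ^ (2 : ℝ≥0∞).toReal :=
    (lp.memℓp f).summable (by norm_num)
  apply Summable.of_nonneg_of_le (fun n => by positivity) _ hs
  intro n
  have : ‖EuclideanSpace.single (0 : Fin 1) ((f : ∀ _, Cm m) n i)‖
      = ‖(f : ∀ _, Cm m) n i‖ := by
    simp [EuclideanSpace.norm_single]
  rw [this]
  have h := coord_norm_le ((f : ∀ _, Cm m) n) i
  exact Real.rpow_le_rpow (norm_nonneg _) h (by norm_num)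

/-- The `i`-th coordinate (column) of a `ℂᵐ`-valued Hardy space function, as a scalar
Hardy space function. -/
def coord (i : Fin m) (f : H2 m) : H2 1 :=
  ⟨fun n => EuclideanSpace.single (0 : Fin 1) ((f : ∀ _, Cm m) n i), coord_memℓp i f⟩

/-- A multiplier on `H²(𝔻, ℂᵐ)` is diagonal, `Ψ = diag(ψ₁, …, ψ_m)`, with scalar
multipliers `ψᵢ` represented by the operators `t i`. -/
def IsDiagonal (T : H2 m →L[ℂ] H2 m) (t : Fin m → (H2 1 →L[ℂ] H2 1)) : Prop :=
  ∀ (f : H2 m) (i : Fin m), coord i (T f) = t i (coord i f)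

/-- The analytic function on the disc associated to a scalar Hardy space element. -/
def toFun (f : H2 1) (z : ℂ) : ℂ := ∑' n : ℕ, ((f : ∀ _, Cm 1) n 0) * z ^ n

/-- `F` is a finite Blaschke product on the unit disc. -/
def IsFiniteBlaschke (F : ℂ → ℂ) : Prop :=
  ∃ (k : ℕ) (c : ℂ) (a : Fin k → ℂ), ‖c‖ = 1 ∧ (∀ i, ‖a i‖ < 1) ∧
    ∀ z ∈ Metric.ball (0 : ℂ) 1,
      F z = c * ∏ i, (z - a i) / (1 - (starRingEnd ℂ) (a i) * z)

/-- `W = M ⊖ (M ∩ zH²)`. -/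
def Wspace (M : Submodule ℂ (H2 m)) : Submodule ℂ (H2 m) :=
  M ⊓ (M ⊓ LinearMap.range (S m : H2 m →ₗ[ℂ] H2 m))ᗮ

end Hardy

/-! For `G ∈ K_Θ` write `G = G(0) + z S*G`. Since `F₀` intertwines the shifts,
`F₀G = F₀G(0) + z F₀(S*G)`, where `F₀G(0) ∈ W` and `z F₀(S*G) = F₀G − F₀G(0) ∈ M ∩ zH²` is
orthogonal to `W`; the columns of `F₀` being orthonormal, `‖F₀G‖² = ‖G(0)‖² + ‖F₀S*G‖²`.
Together with `‖G‖² = ‖G(0)‖² + ‖S*G‖²` this says that the defect `‖F₀G‖² − ‖G‖²` is invariant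
under `S*`, which preserves `K_Θ`. Along the orbit `S*ⁿG → 0` the defect tends to `0`, so it
vanishes. -/

theorem eq_of_tendsto_iterate {X Y : Type*} [TopologicalSpace X] [TopologicalSpace Y]
    [T2Space Y] {A : X → X} {d : X → Y} {x x₀ : X} (hd : ContinuousAt d x₀)
    (hinv : ∀ n, d (A (A^[n] x)) = d (A^[n] x))
    (hlim : Filter.Tendsto (fun n => A^[n] x) Filter.atTop (nhds x₀)) :
    d x = d x₀ := by
  have hconst : ∀ n, d (A^[n] x) = d x := fun n => by
    induction n with
    | zero => rfl
    | succ n ih => rw [Function.iterate_succ_apply', hinv, ih]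
  have hd_lim := hd.tendsto.comp hlim
  simp only [Function.comp_def, hconst] at hd_lim
  exact tendsto_nhds_unique tendsto_const_nhds hd_lim

namespace Hardy

variable {m r r' : ℕ}

lemma S_apply_zero (f : H2 m) : (S m f : ∀ _, Cm m) 0 = 0 := rfl

lemma S_apply_succ (f : H2 m) (n : ℕ) : (S m f : ∀ _, Cm m) (n + 1) = f n := rfl

lemma inner_S_S (f g : H2 m) : inner ℂ (S m f) (S m g) = inner ℂ f g := by
  rw [lp.inner_eq_tsum, lp.inner_eq_tsum,
    (lp.summable_inner (𝕜 := ℂ) (S m f) (S m g)).tsum_eq_zero_add]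
  simp [S_apply_zero, S_apply_succ]

lemma norm_S (f : H2 m) : ‖S m f‖ = ‖f‖ := by
  rw [@norm_eq_sqrt_re_inner ℂ, @norm_eq_sqrt_re_inner ℂ _ _ _ _ f, inner_S_S]

lemma S_single (n : ℕ) (v : Cm m) : S m (lp.single 2 n v) = lp.single 2 (n + 1) v := by
  refine Subtype.ext (funext fun k => ?_)
  cases k with
  | zero => simp [S_apply_zero]
  | succ k => simp [S_apply_succ, Pi.single_apply]

lemma Sadj_apply (f : H2 m) (n : ℕ) : (Sadj m f : ∀ _, Cm m) n = f (n + 1) := by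
  refine ext_inner_right ℂ fun v => ?_
  rw [← lp.inner_single_right, Sadj, adjoint_inner_left, S_single, lp.inner_single_right]

lemma Sadj_iterate_apply (f : H2 m) (n k : ℕ) :
    ((Sadj m)^[n] f : ∀ _, Cm m) k = f (k + n) := by
  induction n generalizing k with
  | zero => rfl
  | succ n ih => rw [Function.iterate_succ_apply', Sadj_apply, ih, add_right_comm, add_assoc]

lemma const_add_S_Sadj (f : H2 m) : const (f 0) + S m (Sadj m f) = f := by
  refine Subtype.ext (funext fun n => ?_)
  cases n with
  | zero => simp [const, S_apply_zero]
  | succ n => simp [const, S_apply_succ, Sadj_apply]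

lemma inner_const_S (v : Cm m) (g : H2 m) : inner ℂ (const v) (S m g) = 0 := by
  rw [const, lp.inner_single_left, S_apply_zero, inner_zero_right]

lemma norm_const (v : Cm m) : ‖const v‖ = ‖v‖ :=
  lp.norm_single (E := fun _ : ℕ => Cm m) (p := 2) (by norm_num) 0 v

lemma norm_sq_eq_norm_sq_zero_add_norm_sq_Sadj (f : H2 m) :
    ‖f‖ ^ 2 = ‖f 0‖ ^ 2 + ‖Sadj m f‖ ^ 2 := by
  conv_lhs => rw [← const_add_S_Sadj f]
  rw [@norm_add_sq ℂ, inner_const_S, norm_const, norm_S]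
  simp

lemma norm_sq_eq_tsum (f : H2 m) : ‖f‖ ^ 2 = ∑' n, ‖f n‖ ^ 2 := by
  simpa using lp.norm_rpow_eq_tsum (p := 2) (by norm_num) f

lemma tendsto_Sadj_iterate (f : H2 m) :
    Filter.Tendsto (fun n => (Sadj m)^[n] f) Filter.atTop (nhds 0) := by
  have hsq : Filter.Tendsto (fun n => ‖(Sadj m)^[n] f‖ ^ 2) Filter.atTop (nhds 0) := by
    simpa only [norm_sq_eq_tsum, Sadj_iterate_apply] using
      tendsto_sum_nat_add fun k => ‖f k‖ ^ 2
  rw [tendsto_zero_iff_norm_tendsto_zero]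
  simpa [Real.sqrt_sq (norm_nonneg _)] using hsq.sqrt

lemma mapsTo_Sadj_modelSpace {Θ : H2 r' →L[ℂ] H2 r} (hΘ : IsMultiplier Θ) :
    Set.MapsTo (Sadj r) (modelSpace Θ) (modelSpace Θ) := by
  have hrange : LinearMap.range (Θ : H2 r' →ₗ[ℂ] H2 r)
      ∈ Module.End.invtSubmodule ((Sadj r).adjoint : H2 r →ₗ[ℂ] H2 r) := by
    rw [Module.End.mem_invtSubmodule_iff_forall_mem_of_mem]
    rintro _ ⟨h, rfl⟩
    rw [Sadj, adjoint_adjoint]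
    exact ⟨S r' h, (DFunLike.congr_fun hΘ h).symm⟩
  exact fun G hG => orthogonal_mem_invtSubmodule hrange hG

section Columns

variable {E : Type*} [NormedAddCommGroup E] [InnerProductSpace ℂ E] (T : H2 r →L[ℂ] E)

def constLinearMap (m : ℕ) : Cm m →ₗ[ℂ] H2 m :=
  lp.singleContinuousLinearMap ℂ (fun _ : ℕ => Cm m) 2 0

lemma constLinearMap_apply (v : Cm m) : constLinearMap m v = const v := rfl

lemma map_constLinearMap_basisFun (i : Fin r) :
    ((T : H2 r →ₗ[ℂ] E) ∘ₗ constLinearMap r) (EuclideanSpace.basisFun (Fin r) ℂ i)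
      = T (e r i) := by
  simp [constLinearMap_apply, e]

lemma map_const_mem {W : Submodule ℂ E} (hW : ∀ i, T (e r i) ∈ W) (v : Cm r) :
    T (const v) ∈ W := by
  have hspan := (Submodule.map_span_le ((T : H2 r →ₗ[ℂ] E) ∘ₗ constLinearMap r)
    (Set.range (EuclideanSpace.basisFun (Fin r) ℂ)) W).2
    (Set.forall_mem_range.2 fun i => map_constLinearMap_basisFun T i ▸ hW i)
  exact hspan ⟨v, (EuclideanSpace.basisFun (Fin r) ℂ).toBasis.mem_span v, rfl⟩

lemma norm_map_const (hT : Orthonormal ℂ fun i => T (e r i)) (v : Cm r) :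
    ‖T (const v)‖ = ‖v‖ := by
  set b := (EuclideanSpace.basisFun (Fin r) ℂ).toBasis
  have hb : Orthonormal ℂ b := by
    rw [OrthonormalBasis.coe_toBasis]; exact OrthonormalBasis.orthonormal _
  have hTb : Orthonormal ℂ (((T : H2 r →ₗ[ℂ] E) ∘ₗ constLinearMap r) ∘ b) := by
    convert hT using 1
    funext i
    exact map_constLinearMap_basisFun T i
  exact (((T : H2 r →ₗ[ℂ] E) ∘ₗ constLinearMap r).isometryOfOrthonormal hb hTb).norm_map v

end Columns

lemma norm_sq_map_eq {M : Submodule ℂ (H2 m)} {T : H2 r →L[ℂ] H2 m} (hT : IsMultiplier T)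
    (hW : ∀ i, T (e r i) ∈ Wspace M) (hON : Orthonormal ℂ fun i => T (e r i))
    {G : H2 r} (hG : T G ∈ M) :
    ‖T G‖ ^ 2 = ‖G 0‖ ^ 2 + ‖T (Sadj r G)‖ ^ 2 := by
  have hsplit : T (const (G 0)) + S m (T (Sadj r G)) = T G := by
    rw [← comp_apply, hT, comp_apply, ← map_add, const_add_S_Sadj]
  have hW0 : T (const (G 0)) ∈ Wspace M := map_const_mem T hW _
  have hzM : S m (T (Sadj r G)) ∈ M ⊓ LinearMap.range (S m : H2 m →ₗ[ℂ] H2 m) := by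
    refine ⟨?_, T (Sadj r G), rfl⟩
    rw [← add_sub_cancel_left (T (const (G 0))) (S m (T (Sadj r G))), hsplit]
    exact M.sub_mem hG hW0.1
  rw [← hsplit, @norm_add_sq ℂ, Submodule.inner_left_of_mem_orthogonal hzM hW0.2, norm_S,
    norm_map_const T hON]
  simp

end Hardy

open Hardy in
theorem stmt_19_general (m r r' : ℕ) (M : Submodule ℂ (H2 m))
    (TF0 : H2 r →L[ℂ] H2 m) (hF0mul : IsMultiplier TF0)
    (hWmem : ∀ i : Fin r, TF0 (e r i) ∈ Wspace M)
    (hWON : Orthonormal ℂ (fun i : Fin r => TF0 (e r i)))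
    (Θ : H2 r' →L[ℂ] H2 r) (hΘ : IsInnerMultiplier Θ)
    (hMrep : M = (modelSpace Θ).map (TF0 : H2 r →ₗ[ℂ] H2 m)) :
    ∀ G ∈ modelSpace Θ, ‖TF0 G‖ = ‖G‖ := by
  intro G hG
  have hdefect : ∀ G ∈ modelSpace Θ,
      ‖TF0 (Sadj r G)‖ ^ 2 - ‖Sadj r G‖ ^ 2 = ‖TF0 G‖ ^ 2 - ‖G‖ ^ 2 := by
    intro G hG
    have hM : TF0 G ∈ M := hMrep ▸ ⟨G, hG, rfl⟩
    rw [norm_sq_map_eq hF0mul hWmem hWON hM, norm_sq_eq_norm_sq_zero_add_norm_sq_Sadj G]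
    ring
  have hzero := eq_of_tendsto_iterate (d := fun G => ‖TF0 G‖ ^ 2 - ‖G‖ ^ 2)
    (by fun_prop : Continuous _).continuousAt
    (fun n => hdefect _ ((mapsTo_Sadj_modelSpace hΘ.2).iterate n hG)) (tendsto_Sadj_iterate G)
  simp only [map_zero, norm_zero, sub_self, zero_pow two_ne_zero, sub_eq_zero] at hzero
  exact (sq_eq_sq₀ (norm_nonneg _) (norm_nonneg _)).mp hzero

open Hardy in
/-- If `M` is a nearly `S*`-invariant subspace of `H²(𝔻, ℂᵐ)` whose associated space
`W = M ⊖ (M ∩ zH²)` has orthonormal basis the columns of `F₀`, and `M = F₀ K_Θ` as in the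
Chalendar–Chevrot–Partington theorem (`Θ` inner with `Θ(0) = 0`), then
`T_{F₀} : K_Θ → M` is isometric. -/
theorem stmt_19 (m r r' : ℕ) (M : Submodule ℂ (H2 m))
    (hclosed : IsClosed (M : Set (H2 m)))
    (hnearly : ∀ F ∈ M, (F : ∀ _ : ℕ, Cm m) 0 = 0 → Sadj m F ∈ M)
    (TF0 : H2 r →L[ℂ] H2 m) (hF0mul : IsMultiplier TF0)
    (hWmem : ∀ i : Fin r, TF0 (e r i) ∈ Wspace M)
    (hWON : Orthonormal ℂ (fun i : Fin r => TF0 (e r i)))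
    (hWspan : Submodule.span ℂ (Set.range fun i : Fin r => TF0 (e r i)) = Wspace M)
    (Θ : H2 r' →L[ℂ] H2 r) (hΘ : IsInnerMultiplier Θ)
    (hΘ0 : ∀ f : H2 r', ((Θ f : H2 r) : ∀ _ : ℕ, Cm r) 0 = 0)
    (hMrep : M = (modelSpace Θ).map (TF0 : H2 r →ₗ[ℂ] H2 m)) :
    ∀ G ∈ modelSpace Θ, ‖TF0 G‖ = ‖G‖ :=
  stmt_19_general m r r' M TF0 hF0mul hWmem hWON Θ hΘ hMrep
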